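/- Let μ and ν be finitely supported probability measures on S with q(μ,ν) < ε. Then for any random variable X with law(X) = μ, there exists a random variable Y on the same nonatomic probability space with law(Y) = ν and ρ(X,Y) < ε. -/

import Mathlib

open MeasureTheory Filter Topology Set
open scoped ENNReal NNReal

/-- The Ky Fan distance between two `S`-valued random variables on `(Ω, P)`:
`inf {ε > 0 : P{ω : d(X ω, Y ω) ≥ ε} ≤ ε}`. -/
noncomputable def kyFanDist {Ω S : Type*} [MeasurableSpace Ω] [PseudoMetricSpace S]
    (P : Measure Ω) (X Y : Ω → S) : ℝ :=
  sInf {ε : ℝ | 0 < ε ∧ (P {ω | ε ≤ dist (X ω) (Y ω)}).toReal ≤ ε}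

/-- A measure is nonatomic if every set of positive measure contains a measurable
subset of strictly smaller positive measure. -/
def Nonatomic {Ω : Type*} [MeasurableSpace Ω] (P : Measure Ω) : Prop :=
  ∀ A : Set Ω, MeasurableSet A → 0 < P A →
    ∃ B ⊆ A, MeasurableSet B ∧ 0 < P B ∧ P B < P A

/-- A finitely supported measure: a finite convex combination of Dirac measures. -/
def FinitelySupported {S : Type*} [MeasurableSpace S] (μ : Measure S) : Prop :=
  ∃ (n : ℕ) (c : Fin n → ℝ≥0∞) (a : Fin n → S),
    (∑ i, c i) = 1 ∧ μ = ∑ i, c i • Measure.dirac (a i)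

/-- Continuity of a path of random variables with respect to the Ky Fan metric
(equivalently, the topology of convergence in probability). -/
def KyFanContinuousOn {Ω S : Type*} [MeasurableSpace Ω] [PseudoMetricSpace S]
    (P : Measure Ω) (γ : ℝ → Ω → S) (A : Set ℝ) : Prop :=
  ∀ t ∈ A, ∀ ε > 0, ∃ δ > 0, ∀ s ∈ A, |s - t| < δ → kyFanDist P (γ s) (γ t) < ε

/-- Continuity of a path of measures with respect to the Lévy–Prokhorov metric. -/
def LPContinuousOn {S : Type*} [MeasurableSpace S] [PseudoMetricSpace S]
    (α : ℝ → Measure S) (A : Set ℝ) : Prop :=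
  ∀ t ∈ A, ∀ ε > 0, ∃ δ > 0, ∀ s ∈ A, |s - t| < δ → levyProkhorovDist (α s) (α t) < ε

/-- A polygonal path in the space of measures with vertices in `V`: there is a partition
`0 = t₀ < t₁ < ⋯ < t_{n+1} = 1` and vertices `μᵢ ∈ V` such that on `[tᵢ, tᵢ₊₁]` the path
is the affine interpolation of `μᵢ` and `μᵢ₊₁`. -/
def IsPolygonalWithVertices {S : Type*} [MeasurableSpace S] (β : ℝ → Measure S)
    (V : Set (Measure S)) : Prop :=
  ∃ (n : ℕ) (t : Fin (n + 2) → ℝ) (μ : Fin (n + 2) → Measure S),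
    StrictMono t ∧ t 0 = 0 ∧ t (Fin.last (n + 1)) = 1 ∧ (∀ i, μ i ∈ V) ∧
    ∀ (i : Fin (n + 1)), ∀ s ∈ Set.Icc (t i.castSucc) (t i.succ),
      β s = ENNReal.ofReal ((t i.succ - s) / (t i.succ - t i.castSucc)) • μ i.castSucc
        + ENNReal.ofReal ((s - t i.castSucc) / (t i.succ - t i.castSucc)) • μ i.succ

/-!
Since `q(μ, ν) < η`, every set `A` of atoms of `μ` satisfies `μ A ≤ ν (A^η) + η`. Applying Hall's
marriage theorem to a fine discretisation of the masses turns this into an approximate Strassen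
theorem: a finitely supported coupling `γ` of `μ` and `ν` with `γ {d ≥ η} ≤ η + δ`. On a nonatomic
space each fibre `{X = s}` splits into pieces of masses `γ {(s, t)}` (Sierpiński), and `Y := t` on
the piece of `(s, t)` has law `ν` and `P {d(X, Y) ≥ η + δ} ≤ η + δ`.
-/

open Function

namespace MeasureTheory.Measure

variable {α β ι : Type*} [MeasurableSpace α] [MeasurableSpace β] [Fintype ι]

lemma sum_smul_dirac_apply [MeasurableSingletonClass α] (c : ι → ℝ≥0∞) (a : ι → α) (s : Set α)
    [DecidablePred (· ∈ s)] : (∑ i, c i • dirac (a i)) s = ∑ i with a i ∈ s, c i := by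
  simp [finsetSum_apply, dirac_apply, Finset.sum_filter, Set.indicator_apply]

lemma map_sum_smul_dirac {f : α → β} (hf : Measurable f) (c : ι → ℝ≥0∞) (a : ι → α) :
    (∑ i, c i • dirac (a i)).map f = ∑ i, c i • dirac (f (a i)) := by
  ext s hs
  simp only [map_apply hf hs, finsetSum_apply, smul_apply, dirac_apply' _ hs,
    dirac_apply' _ (hf hs)]
  rfl

end MeasureTheory.Measure

lemma ENNReal.exists_mem_forall_le_two_mul {α : Type*} {s : Set α} (hs : s.Nonempty)
    {f : α → ℝ≥0∞} (hf : ⨆ x ∈ s, f x ≠ ∞) : ∃ x ∈ s, ∀ y ∈ s, f y ≤ 2 * f x := by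
  set M := ⨆ x ∈ s, f x
  rcases eq_or_ne M 0 with hM | hM
  · obtain ⟨x, hx⟩ := hs
    exact ⟨x, hx, fun y hy => (le_biSup f hy).trans (hM.le.trans bot_le)⟩
  · obtain ⟨x, hx, hMx⟩ := lt_biSup_iff.1 (ENNReal.half_lt_self hM hf)
    refine ⟨x, hx, fun y hy => ?_⟩
    calc f y ≤ M := le_biSup f hy
      _ = 2 * (M / 2) := (ENNReal.mul_div_cancel two_ne_zero ENNReal.ofNat_ne_top).symm
      _ ≤ 2 * f x := by gcongr

lemma FinitelySupported.of_fintype {S ι : Type*} [MeasurableSpace S] [Fintype ι]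
    {c : ι → ℝ≥0∞} (hc : ∑ i, c i = 1) (a : ι → S) :
    FinitelySupported (∑ i, c i • Measure.dirac (a i)) := by
  let e := (Fintype.equivFin ι).symm
  exact ⟨Fintype.card ι, c ∘ e, a ∘ e, (e.sum_comp c).trans hc,
    (e.sum_comp fun i => c i • Measure.dirac (a i)).symm⟩

lemma MeasureTheory.exists_measurable_index {Ω ι : Type*} [MeasurableSpace Ω] [MeasurableSpace ι]
    [Countable ι] [Nonempty ι] {B : ι → Set Ω} (hB : ∀ i, MeasurableSet (B i))
    (hdisj : Pairwise (Disjoint on B)) : ∃ J : Ω → ι, Measurable J ∧ ∀ i, ∀ ω ∈ B i, J ω = i := by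
  classical
  let i₀ : ι := Classical.arbitrary ι
  let J : Ω → ι := fun ω => if h : ∃ i, ω ∈ B i then h.choose else i₀
  have hJ (i : ι) (ω : Ω) (hω : ω ∈ B i) : J ω = i := by
    have h : ∃ i, ω ∈ B i := ⟨i, hω⟩
    simp only [J, dif_pos h]
    by_contra hne
    exact Set.disjoint_left.1 (hdisj hne) h.choose_spec hω
  refine ⟨J, measurable_to_countable' fun i => ?_, hJ⟩
  have hfiber : J ⁻¹' {i} = B i ∪ ((⋃ j, B j)ᶜ ∩ {_ω | i₀ = i}) := by
    ext ω
    by_cases h : ∃ j, ω ∈ B j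
    · obtain ⟨j, hj⟩ := h
      have hω : ω ∈ ⋃ j, B j := mem_iUnion.2 ⟨j, hj⟩
      simp only [mem_preimage, mem_singleton_iff, mem_union, mem_inter_iff, mem_compl_iff, hω,
        not_true, false_and, or_false]
      exact ⟨fun h => (hJ j ω hj).symm.trans h ▸ hj, hJ i ω⟩
    · simp [J, fun i => not_exists.1 h i]
  rw [hfiber]
  exact (hB i).union ((MeasurableSet.iUnion hB).compl.inter (MeasurableSet.const _))

namespace Nonatomic

variable {Ω : Type*} [MeasurableSpace Ω] {P : Measure Ω}

lemma exists_subset_measure_pos_le_half (hna : Nonatomic P) [IsFiniteMeasure P] {A : Set Ω}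
    (hA : MeasurableSet A) (hpos : 0 < P A) :
    ∃ B ⊆ A, MeasurableSet B ∧ 0 < P B ∧ P B ≤ P A / 2 := by
  obtain ⟨B, hBA, hB, hB0, hBA'⟩ := hna A hA hpos
  have hdiff : P (A \ B) = P A - P B := measure_sdiff hBA hB.nullMeasurableSet (measure_ne_top P B)
  by_cases h : P B ≤ P A / 2
  · exact ⟨B, hBA, hB, hB0, h⟩
  · refine ⟨A \ B, sdiff_subset, hA.diff hB, by rwa [hdiff, tsub_pos_iff_lt], ?_⟩
    calc P (A \ B) = P A - P B := hdiff
      _ ≤ P A - P A / 2 := tsub_le_tsub_left (not_le.1 h).le _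
      _ = P A / 2 := ENNReal.sub_half (measure_ne_top P A)

lemma exists_subset_measure_pos_le (hna : Nonatomic P) [IsFiniteMeasure P] {A : Set Ω}
    (hA : MeasurableSet A) (hpos : 0 < P A) {δ : ℝ≥0∞} (hδ : 0 < δ) :
    ∃ B ⊆ A, MeasurableSet B ∧ 0 < P B ∧ P B ≤ δ := by
  have halving (n : ℕ) : ∃ B ⊆ A, MeasurableSet B ∧ 0 < P B ∧ P B ≤ 2⁻¹ ^ n * P A := by
    induction n with
    | zero => exact ⟨A, subset_rfl, hA, hpos, by simp⟩
    | succ n ih =>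
      obtain ⟨B, hBA, hB, hB0, hBle⟩ := ih
      obtain ⟨C, hCB, hC, hC0, hCle⟩ := hna.exists_subset_measure_pos_le_half hB hB0
      refine ⟨C, hCB.trans hBA, hC, hC0, hCle.trans ?_⟩
      calc P B / 2 ≤ 2⁻¹ ^ n * P A / 2 := by gcongr
        _ = 2⁻¹ ^ (n + 1) * P A := by rw [ENNReal.div_eq_inv_mul, pow_succ]; ring
  have hlim : Tendsto (fun n : ℕ => (2⁻¹ : ℝ≥0∞) ^ n * P A) atTop (𝓝 0) := by
    simpa using ENNReal.Tendsto.mul_const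
      (ENNReal.tendsto_pow_atTop_nhds_zero_of_lt_one (by norm_num)) (Or.inr (measure_ne_top P A))
  obtain ⟨n, hn⟩ := (hlim.eventually (gt_mem_nhds hδ)).exists
  obtain ⟨B, hBA, hB, hB0, hBle⟩ := halving n
  exact ⟨B, hBA, hB, hB0, hBle.trans hn.le⟩

theorem exists_subset_measure_eq (hna : Nonatomic P) [IsFiniteMeasure P] {A : Set Ω}
    (hA : MeasurableSet A) {r : ℝ≥0∞} (hr : r ≤ P A) : ∃ B ⊆ A, MeasurableSet B ∧ P B = r := by
  have greedy (B : Set Ω) : ∃ C ⊆ A \ B, MeasurableSet C ∧ P C ≤ r - P B ∧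
      ∀ C' ⊆ A \ B, MeasurableSet C' → P C' ≤ r - P B → P C' ≤ 2 * P C := by
    obtain ⟨C, ⟨hCA, hC, hCr⟩, hmax⟩ := ENNReal.exists_mem_forall_le_two_mul
      (s := {C | C ⊆ A \ B ∧ MeasurableSet C ∧ P C ≤ r - P B}) (f := P)
      ⟨∅, empty_subset _, MeasurableSet.empty, by simp⟩
      (ne_top_of_le_ne_top (measure_ne_top P univ)
        (iSup₂_le fun C _ => measure_mono (subset_univ C)))
    exact ⟨C, hCA, hC, hCr, fun C' hC'A hC' hC'r => hmax C' ⟨hC'A, hC', hC'r⟩⟩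
  choose step hstepA hstep hstepr hstepmax using greedy
  let B : ℕ → Set Ω := fun n => Nat.rec ∅ (fun _ B => B ∪ step B) n
  have hB_succ (n : ℕ) : B (n + 1) = B n ∪ step (B n) := rfl
  have hB (n : ℕ) : B n ⊆ A ∧ MeasurableSet (B n) ∧ P (B n) ≤ r := by
    induction n with
    | zero => exact ⟨empty_subset _, MeasurableSet.empty, by simp [B]⟩
    | succ n ih =>
      obtain ⟨hBA, hBm, hBr⟩ := ih
      refine ⟨union_subset hBA ((hstepA _).trans sdiff_subset), hBm.union (hstep _), ?_⟩
      calc P (B (n + 1)) ≤ P (B n) + P (step (B n)) := measure_union_le _ _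
        _ ≤ P (B n) + (r - P (B n)) := by gcongr; exact hstepr _
        _ = r := add_tsub_cancel_of_le hBr
  have hU : MeasurableSet (⋃ n, B n) := .iUnion fun n => (hB n).2.1
  have hUA : (⋃ n, B n) ⊆ A := iUnion_subset fun n => (hB n).1
  refine ⟨⋃ n, B n, hUA, hU, le_antisymm ?_ (not_lt.1 fun hlt => ?_)⟩
  · rw [(monotone_nat_of_le_succ fun n => subset_union_left : Monotone B).measure_iUnion]
    exact iSup_le fun n => (hB n).2.2
  -- A small piece `C` of the remainder stays admissible at every stage, so every stage adds at
  -- least `P C / 2`.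
  obtain ⟨C, hCA, hC, hC0, hCr⟩ := hna.exists_subset_measure_pos_le (hA.diff hU)
    (by rw [measure_sdiff hUA hU.nullMeasurableSet (measure_ne_top P _), tsub_pos_iff_lt]
        exact hlt.trans_le hr)
    (tsub_pos_of_lt hlt)
  have hgrow (n : ℕ) : n * P C ≤ 2 * P (B n) := by
    induction n with
    | zero => simp
    | succ n ih =>
      have hadm : P C ≤ 2 * P (step (B n)) :=
        hstepmax _ C (hCA.trans (sdiff_subset_sdiff_right (subset_iUnion B n))) hC
          (hCr.trans (tsub_le_tsub_left (measure_mono (subset_iUnion B n)) r))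
      have hdisj : Disjoint (B n) (step (B n)) := disjoint_sdiff_right.mono_right (hstepA _)
      calc ((n + 1 : ℕ) : ℝ≥0∞) * P C = n * P C + P C := by push_cast; ring
        _ ≤ 2 * P (B n) + 2 * P (step (B n)) := add_le_add ih hadm
        _ = 2 * P (B (n + 1)) := by rw [hB_succ, measure_union hdisj (hstep _), mul_add]
  obtain ⟨n, hn⟩ := ENNReal.exists_nat_mul_gt hC0.ne'
    (ENNReal.mul_ne_top (ENNReal.ofNat_ne_top (n := 2))
      (ne_top_of_le_ne_top (measure_ne_top P A) hr))
  exact (hgrow n).trans (by gcongr; exact (hB n).2.2) |>.not_gt hn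

theorem exists_pairwiseDisjoint_measure_eq {ι : Type*} (hna : Nonatomic P) [IsFiniteMeasure P]
    (m : ι → ℝ≥0∞) (t : Finset ι) {A : Set Ω} (hA : MeasurableSet A) (hm : ∑ i ∈ t, m i = P A) :
    ∃ B : ι → Set Ω, (∀ i ∈ t, MeasurableSet (B i) ∧ B i ⊆ A ∧ P (B i) = m i) ∧
      (t : Set ι).PairwiseDisjoint B := by
  classical
  induction t using Finset.cons_induction generalizing A with
  | empty => exact ⟨fun _ => ∅, by simp, by simp⟩
  | cons i t hit ih =>
    rw [Finset.sum_cons] at hm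
    have hmi : m i ≤ P A := hm ▸ le_self_add
    obtain ⟨C, hCA, hC, hPC⟩ := hna.exists_subset_measure_eq hA hmi
    obtain ⟨B, hB, hdisj⟩ := ih (hA.diff hC) (by
      rw [measure_sdiff hCA hC.nullMeasurableSet (measure_ne_top P C), hPC, ← hm,
        ENNReal.add_sub_cancel_left (ne_top_of_le_ne_top (measure_ne_top P A) hmi)])
    have hne (j : ι) (hj : j ∈ t) : j ≠ i := fun h => hit (h ▸ hj)
    refine ⟨Function.update B i C, fun j hj => ?_, ?_⟩
    · rcases Finset.mem_cons.1 hj with rfl | hj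
      · simpa using ⟨hC, hCA, hPC⟩
      · obtain ⟨hBj, hBjA, hPBj⟩ := hB j hj
        simpa [Function.update_of_ne (hne j hj)] using ⟨hBj, hBjA.trans sdiff_subset, hPBj⟩
    · rw [Finset.coe_cons]
      refine PairwiseDisjoint.insert (fun j hj k hk hjk => ?_) fun j hj _ => ?_
      · simpa [Function.onFun, Function.update_of_ne (hne j hj), Function.update_of_ne (hne k hk)]
          using hdisj hj hk hjk
      · simpa [Function.update_of_ne (hne j hj)]
          using disjoint_sdiff_right.mono_right (hB j hj).2.1

theorem exists_pairwise_disjoint_subset_preimage {S ι : Type*} [MeasurableSpace S]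
    [MeasurableSingletonClass S] [Fintype ι] (hna : Nonatomic P) [IsFiniteMeasure P]
    {X : Ω → S} (hX : Measurable X) {c : ι → ℝ≥0∞} {a : ι → S}
    (hlaw : P.map X = ∑ i, c i • Measure.dirac (a i)) :
    ∃ B : ι → Set Ω, (∀ i, MeasurableSet (B i) ∧ B i ⊆ X ⁻¹' {a i} ∧ P (B i) = c i) ∧
      Pairwise (Disjoint on B) := by
  classical
  have hfiber (s : S) : ∑ i with a i = s, c i = P (X ⁻¹' {s}) := by
    rw [← Measure.map_apply hX (measurableSet_singleton s), hlaw, Measure.sum_smul_dirac_apply]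
    simp
  choose B hB hdisj using fun s => hna.exists_pairwiseDisjoint_measure_eq c _
    (hX (measurableSet_singleton s)) (hfiber s)
  refine ⟨fun i => B (a i) i, fun i => hB (a i) i (by simp), fun i j hij => ?_⟩
  by_cases ha : a i = a j
  · simp only [Function.onFun, ha]
    exact hdisj (a j) (by simp [ha]) (by simp) hij
  · exact Disjoint.mono (hB (a i) i (by simp)).2.1 (hB (a j) j (by simp)).2.1
      ((disjoint_singleton.2 ha).preimage X)

theorem exists_index_of_map_eq {S ι : Type*} [MeasurableSpace S] [MeasurableSingletonClass S] [Fintype ι]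
    [MeasurableSpace ι] [MeasurableSingletonClass ι] (hna : Nonatomic P) [IsProbabilityMeasure P]
    {X : Ω → S} (hX : Measurable X) {c : ι → ℝ≥0∞} {a : ι → S}
    (hlaw : P.map X = ∑ i, c i • Measure.dirac (a i)) :
    ∃ J : Ω → ι, Measurable J ∧ P.map J = ∑ i, c i • Measure.dirac i ∧ ∀ᵐ ω ∂P, X ω = a (J ω) := by
  classical
  obtain ⟨B, hB, hdisj⟩ := hna.exists_pairwise_disjoint_subset_preimage hX hlaw
  have hcover : ∀ᵐ ω ∂P, ∃ i, ω ∈ B i := by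
    have hsum : ∑ i, c i = 1 := by
      simpa [Measure.map_apply hX .univ, Measure.sum_smul_dirac_apply]
        using congrArg (· univ) hlaw.symm
    have htot : P (⋃ i, B i) = 1 := by
      rw [measure_iUnion hdisj (fun i => (hB i).1), tsum_fintype, ← hsum]
      exact Finset.sum_congr rfl fun i _ => (hB i).2.2
    filter_upwards [mem_ae_iff.2 ((prob_compl_eq_zero_iff (.iUnion fun i => (hB i).1)).2 htot)]
      with ω hω using mem_iUnion.1 hω
  have : Nonempty ι := by
    obtain ⟨_, i, _⟩ := hcover.exists
    exact ⟨i⟩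
  obtain ⟨J, hJ, hJB⟩ := exists_measurable_index (fun i => (hB i).1) hdisj
  refine ⟨J, hJ, Measure.ext_iff_singleton.2 fun i => ?_, ?_⟩
  · rw [Measure.map_apply hJ (measurableSet_singleton i), Measure.sum_smul_dirac_apply]
    simp only [mem_singleton_iff, Finset.sum_filter, Finset.sum_ite_eq', Finset.mem_univ, if_true]
    rw [← (hB i).2.2]
    refine measure_congr (eventuallyEq_set.2 ?_)
    filter_upwards [hcover] with ω ⟨j, hj⟩
    simp only [mem_preimage, mem_singleton_iff, hJB j ω hj]
    exact ⟨fun h => h ▸ hj, fun hi => (hJB j ω hj).symm.trans (hJB i ω hi)⟩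
  · filter_upwards [hcover] with ω ⟨i, hi⟩
    rw [hJB i ω hi]
    exact (hB i).2.1 hi

theorem exists_map_prodMk_eq {S S' : Type*} [MeasurableSpace S] [MeasurableSingletonClass S]
    [MeasurableSpace S'] (hna : Nonatomic P) [IsProbabilityMeasure P] {X : Ω → S}
    (hX : Measurable X) {γ : Measure (S × S')} (hγ : FinitelySupported γ)
    (hlaw : P.map X = γ.map Prod.fst) :
    ∃ Y : Ω → S', Measurable Y ∧ P.map (fun ω => (X ω, Y ω)) = γ := by
  obtain ⟨n, c, a, -, rfl⟩ := hγ
  rw [Measure.map_sum_smul_dirac measurable_fst] at hlaw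
  obtain ⟨J, hJ, hJlaw, hXJ⟩ := hna.exists_index_of_map_eq hX hlaw
  refine ⟨fun ω => (a (J ω)).2, (measurable_of_countable fun i => (a i).2).comp hJ, ?_⟩
  calc P.map (fun ω => (X ω, (a (J ω)).2)) = P.map (a ∘ J) :=
        Measure.map_congr (by filter_upwards [hXJ] with ω hω using Prod.ext hω rfl)
    _ = (P.map J).map a := (Measure.map_map (measurable_of_countable a) hJ).symm
    _ = ∑ i, c i • Measure.dirac (a i) := by
        rw [hJlaw, Measure.map_sum_smul_dirac (measurable_of_countable a)]

end Nonatomic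

section Coupling

open Finset

variable {ι κ : Type*} [Fintype ι] [Fintype κ]

theorem exists_nat_transport_of_hall (r : ι → κ → Prop) [∀ i j, Decidable (r i j)]
    (f : ι → ℕ) (g : κ → ℕ) (K : ℕ)
    (hall : ∀ A : Finset ι, ∑ i ∈ A, f i ≤ ∑ j with ∃ i ∈ A, r i j, g j + K) :
    ∃ m : ι → κ → ℕ, (∀ i j, m i j ≠ 0 → r i j) ∧ (∀ i, ∑ j, m i j ≤ f i) ∧
      (∀ j, ∑ i, m i j ≤ g j) ∧ ∑ i, f i ≤ ∑ i, ∑ j, m i j + K := by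
  classical
  -- Hall's marriage theorem for `f i` copies of each `i` against `g j` copies of each `j` and
  -- `K` dummies that are adjacent to everything.
  let R : (Σ i, Fin (f i)) → (Σ j, Fin (g j)) ⊕ Fin K → Prop :=
    fun p => Sum.elim (fun q => r p.1 q.1) fun _ => True
  let tgt : (Σ j, Fin (g j)) ⊕ Fin K → Option κ := Sum.elim (fun q => some q.1) fun _ => none
  have hR (p : Σ i, Fin (f i)) (b : (Σ j, Fin (g j)) ⊕ Fin K) (j : κ) (hb : tgt b = some j) :
      R p b → r p.1 j := by
    rcases b with ⟨j', k⟩ | k <;> simp_all [R, tgt]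
  obtain ⟨F, hFinj, hFR⟩ := (Fintype.all_card_le_filter_rel_iff_exists_injective R).1 <| by
    intro A
    rcases A.eq_empty_or_nonempty with rfl | ⟨p₀, hp₀⟩
    · simp
    let N := ({j | ∃ i ∈ A.image Sigma.fst, r i j} : Finset κ)
    calc #A ≤ #((A.image Sigma.fst).sigma fun i => (univ : Finset (Fin (f i)))) :=
          card_le_card fun p hp => by simpa using ⟨p.2, hp⟩
      _ ≤ ∑ j ∈ N, g j + K := by
          rw [card_sigma]
          simpa only [card_univ, Fintype.card_fin] using hall (A.image Sigma.fst)
      _ = #((N.sigma fun j => (univ : Finset (Fin (g j)))).disjSum (univ : Finset (Fin K))) := by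
          simp [card_disjSum, card_sigma]
      _ ≤ #{b | ∃ p ∈ A, R p b} := card_le_card <| by
          rintro (⟨j, k⟩ | k) hb
          · have hj : j ∈ N := by simpa using hb
            obtain ⟨i, hi, hij⟩ := (mem_filter.1 hj).2
            obtain ⟨p, hp, rfl⟩ := mem_image.1 hi
            exact mem_filter.2 ⟨mem_univ _, p, hp, hij⟩
          · exact mem_filter.2 ⟨mem_univ _, p₀, hp₀, trivial⟩
  let m : ι → κ → ℕ := fun i j => #{k : Fin (f i) | tgt (F ⟨i, k⟩) = some j}
  have hfiber (o : Option κ) : #{p | tgt (F p) = o} ≤ #{b | tgt b = o} :=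
    card_le_card_of_injOn F (fun p hp => by simpa using hp) hFinj.injOn
  have hcol (j : κ) : ∑ i, m i j = #{p | tgt (F p) = some j} := by
    simp only [m, card_filter, Fintype.sum_sigma]
  refine ⟨m, fun i j hij => ?_, fun i => ?_, fun j => ?_, ?_⟩
  · obtain ⟨k, hk⟩ := card_ne_zero.1 hij
    exact hR _ _ j (by simpa using hk) (hFR ⟨i, k⟩)
  · calc ∑ j, m i j ≤ #{k : Fin (f i) | tgt (F ⟨i, k⟩) = none} + ∑ j, m i j := le_add_self
      _ = f i := by
          rw [← Fintype.sum_option fun o => #{k : Fin (f i) | tgt (F ⟨i, k⟩) = o},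
            ← card_eq_sum_card_fiberwise (by simp), card_univ, Fintype.card_fin]
  · rw [hcol]
    refine (hfiber _).trans (le_of_eq ?_)
    rw [card_filter, Fintype.sum_sum_type, Fintype.sum_sigma,
      Fintype.sum_eq_single j fun j' hj' => by simp [tgt, hj']]
    simp [tgt]
  · calc ∑ i, f i = #{p | tgt (F p) = none} + ∑ j, #{p | tgt (F p) = some j} := by
          rw [← Fintype.sum_option fun o => #{p | tgt (F p) = o},
            ← card_eq_sum_card_fiberwise (by simp), card_univ, Fintype.card_sigma]
          simp
      _ ≤ K + ∑ i, ∑ j, m i j := by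
          rw [sum_comm]
          simp_rw [hcol]
          gcongr
          refine (hfiber none).trans (le_of_eq ?_)
          rw [card_filter, Fintype.sum_sum_type]
          simp [tgt]
      _ = ∑ i, ∑ j, m i j + K := add_comm _ _

theorem exists_subcoupling_of_hall (r : ι → κ → Prop) [∀ i j, Decidable (r i j)] {w : ι → ℝ}
    {v : κ → ℝ} (hw : 0 ≤ w) (hv : 0 ≤ v) {η δ : ℝ} (hη : 0 ≤ η) (hδ : 0 < δ)
    (hall : ∀ A : Finset ι, ∑ i ∈ A, w i ≤ ∑ j with ∃ i ∈ A, r i j, v j + η) :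
    ∃ π : ι → κ → ℝ, 0 ≤ π ∧ (∀ i j, π i j ≠ 0 → r i j) ∧ (∀ i, ∑ j, π i j ≤ w i) ∧
      (∀ j, ∑ i, π i j ≤ v j) ∧ ∑ i, w i - (η + δ) ≤ ∑ i, ∑ j, π i j := by
  -- Round the masses down to multiples of `1 / N`; rounding loses at most `(#ι + #κ + 1) / N`.
  obtain ⟨N, hN⟩ := exists_nat_gt ((Fintype.card ι + Fintype.card κ + 1) / δ)
  have hN0 : (0 : ℝ) < N := lt_of_le_of_lt (by positivity) hN
  have hNδ : (Fintype.card ι + Fintype.card κ + 1 : ℝ) ≤ δ * N := by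
    rw [div_lt_iff₀ hδ] at hN
    linarith
  let f : ι → ℕ := fun i => ⌊w i * N⌋₊
  let g : κ → ℕ := fun j => ⌊v j * N⌋₊
  let K : ℕ := ⌈η * N⌉₊ + Fintype.card κ
  have hf (i : ι) : (f i : ℝ) ≤ w i * N := Nat.floor_le (mul_nonneg (hw i) hN0.le)
  have hg (j : κ) : (g j : ℝ) ≤ v j * N := Nat.floor_le (mul_nonneg (hv j) hN0.le)
  obtain ⟨m, hmr, hrow, hcol, htot⟩ := exists_nat_transport_of_hall r f g K fun A => by
    have hcard : (#{j | ∃ i ∈ A, r i j} : ℝ) ≤ Fintype.card κ := by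
      exact_mod_cast card_le_univ _
    have key : (∑ i ∈ A, f i : ℝ) ≤ ∑ j with ∃ i ∈ A, r i j, (g j : ℝ) + K :=
      calc (∑ i ∈ A, f i : ℝ) ≤ (∑ i ∈ A, w i) * N := by
            rw [sum_mul]
            exact sum_le_sum fun i _ => hf i
        _ ≤ (∑ j with ∃ i ∈ A, r i j, v j + η) * N := by gcongr; exact hall A
        _ = ∑ j with ∃ i ∈ A, r i j, v j * N + η * N := by rw [add_mul, sum_mul]
        _ ≤ ∑ j with ∃ i ∈ A, r i j, ((g j : ℝ) + 1) + ⌈η * N⌉₊ := by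
            gcongr with j
            exacts [(Nat.lt_floor_add_one _).le, Nat.le_ceil _]
        _ ≤ ∑ j with ∃ i ∈ A, r i j, (g j : ℝ) + K := by
            rw [sum_add_distrib]
            push_cast [K]
            simp only [sum_const, nsmul_eq_mul, mul_one]
            linarith
    exact_mod_cast key
  refine ⟨fun i j => m i j / N, fun i j => by positivity,
    fun i j h => hmr i j fun hm => h (by simp [hm]), fun i => ?_, fun j => ?_, ?_⟩
  · rw [← sum_div, div_le_iff₀ hN0]
    exact le_trans (by exact_mod_cast hrow i) (hf i)
  · rw [← sum_div, div_le_iff₀ hN0]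
    exact le_trans (by exact_mod_cast hcol j) (hg j)
  · have hfN : ∑ i, w i * N - Fintype.card ι ≤ ∑ i, (f i : ℝ) := by
      have := sum_le_sum fun i (_ : i ∈ Finset.univ) => (Nat.lt_floor_add_one (w i * N)).le
      simp only [sum_add_distrib, sum_const, card_univ, nsmul_eq_mul, mul_one] at this
      linarith
    have hK : (K : ℝ) ≤ η * N + 1 + Fintype.card κ := by
      push_cast [K]
      linarith [Nat.ceil_lt_add_one (mul_nonneg hη hN0.le)]
    have htot' : (∑ i, f i : ℝ) ≤ ∑ i, ∑ j, (m i j : ℝ) + K := by exact_mod_cast htot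
    rw [← sum_mul] at hfN
    simp_rw [← sum_div]
    rw [le_div_iff₀ hN0]
    linarith

theorem exists_coupling_ge {π₀ : ι → κ → ℝ} {w : ι → ℝ} {v : κ → ℝ}
    (hrow : ∀ i, ∑ j, π₀ i j ≤ w i) (hcol : ∀ j, ∑ i, π₀ i j ≤ v j)
    (hwv : ∑ i, w i = ∑ j, v j) :
    ∃ π : ι → κ → ℝ, π₀ ≤ π ∧ (∀ i, ∑ j, π i j = w i) ∧ (∀ j, ∑ i, π i j = v j) := by
  -- Fill the row deficits `ρ` and column deficits `σ` proportionally: `π = π₀ + ρ ⊗ σ / D`.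
  let ρ : ι → ℝ := fun i => w i - ∑ j, π₀ i j
  let σ : κ → ℝ := fun j => v j - ∑ i, π₀ i j
  let D := ∑ i, ρ i
  have hρ (i : ι) : 0 ≤ ρ i := sub_nonneg.2 (hrow i)
  have hσ (j : κ) : 0 ≤ σ j := sub_nonneg.2 (hcol j)
  have hσD : ∑ j, σ j = D := by
    simp only [σ, ρ, D, sum_sub_distrib, hwv]
    rw [sum_comm]
  have cancel {x : ℝ} (hx : 0 ≤ x) (hxD : x ≤ D) : x * D / D = x := by
    rcases eq_or_ne D 0 with hD | hD
    · simp [le_antisymm (hD ▸ hxD) hx]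
    · exact mul_div_cancel_right₀ x hD
  refine ⟨fun i j => π₀ i j + ρ i * σ j / D, fun i j => le_add_of_nonneg_right ?_,
    fun i => ?_, fun j => ?_⟩
  · exact div_nonneg (mul_nonneg (hρ i) (hσ j)) (sum_nonneg fun i _ => hρ i)
  · rw [sum_add_distrib, ← sum_div, ← mul_sum, hσD,
      cancel (hρ i) (single_le_sum (fun i _ => hρ i) (mem_univ i))]
    simp [ρ]
  · rw [sum_add_distrib, ← sum_div, ← sum_mul, mul_comm, show ∑ i, ρ i = D from rfl,
      cancel (hσ j) (hσD ▸ single_le_sum (fun j _ => hσ j) (mem_univ j))]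
    simp [σ]

theorem exists_coupling_of_hall (r : ι → κ → Prop) [∀ i j, Decidable (r i j)] {w : ι → ℝ}
    {v : κ → ℝ} (hw : 0 ≤ w) (hv : 0 ≤ v) (hwv : ∑ i, w i = ∑ j, v j) {η δ : ℝ} (hη : 0 ≤ η)
    (hδ : 0 < δ) (hall : ∀ A : Finset ι, ∑ i ∈ A, w i ≤ ∑ j with ∃ i ∈ A, r i j, v j + η) :
    ∃ π : ι → κ → ℝ, 0 ≤ π ∧ (∀ i, ∑ j, π i j = w i) ∧ (∀ j, ∑ i, π i j = v j) ∧
      ∑ i, ∑ j with ¬ r i j, π i j ≤ η + δ := by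
  obtain ⟨π₀, hπ₀, hπ₀r, hrow, hcol, htot⟩ := exists_subcoupling_of_hall r hw hv hη hδ hall
  obtain ⟨π, hπ₀π, hπrow, hπcol⟩ := exists_coupling_ge hrow hcol hwv
  refine ⟨π, hπ₀.trans hπ₀π, hπrow, hπcol, ?_⟩
  calc ∑ i, ∑ j with ¬ r i j, π i j = ∑ i, ∑ j with ¬ r i j, (π i j - π₀ i j) := by
        refine sum_congr rfl fun i _ => sum_congr rfl fun j hj => ?_
        rw [not_imp_comm.1 (hπ₀r i j) (mem_filter.1 hj).2, sub_zero]
    _ ≤ ∑ i, ∑ j, (π i j - π₀ i j) := by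
        refine sum_le_sum fun i _ => sum_le_sum_of_subset_of_nonneg (filter_subset _ _)
          fun j _ _ => sub_nonneg.2 (hπ₀π i j)
    _ = ∑ i, w i - ∑ i, ∑ j, π₀ i j := by simp [sum_sub_distrib, hπrow]
    _ ≤ η + δ := by linarith

end Coupling

section LevyProkhorov

open Finset

variable {S : Type*} [PseudoMetricSpace S] [MeasurableSpace S] [MeasurableSingletonClass S]

theorem sum_le_sum_of_levyProkhorovDist_lt {ι κ : Type*} [Fintype ι] [Fintype κ]
    {c : ι → ℝ≥0∞} {a : ι → S} {d : κ → ℝ≥0∞} {b : κ → S} [IsFiniteMeasure (∑ i, c i • Measure.dirac (a i))]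
    [IsFiniteMeasure (∑ j, d j • Measure.dirac (b j))] {η : ℝ}
    (h : levyProkhorovDist (∑ i, c i • Measure.dirac (a i)) (∑ j, d j • Measure.dirac (b j)) < η)
    (A : Finset ι) :
    ∑ i ∈ A, (c i).toReal ≤ ∑ j with ∃ i ∈ A, dist (a i) (b j) < η, (d j).toReal + η := by
  classical
  have hη : 0 < η := lt_of_le_of_lt ENNReal.toReal_nonneg h
  have hLP := left_measure_le_of_levyProkhorovEDist_lt
    ((ENNReal.lt_ofReal_iff_toReal_lt (levyProkhorovEDist_ne_top _ _)).2 h)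
    (A.finite_toSet.image a).measurableSet
  rw [ENNReal.toReal_ofReal hη.le, Measure.sum_smul_dirac_apply,
    Measure.sum_smul_dirac_apply] at hLP
  have hA : ∑ i ∈ A, c i ≤ ∑ i with a i ∈ a '' A, c i :=
    sum_le_sum_of_subset fun i hi => by simpa using ⟨i, hi, rfl⟩
  have hN : ∑ j with b j ∈ Metric.thickening η (a '' A), d j =
      ∑ j with ∃ i ∈ A, dist (a i) (b j) < η, d j :=
    sum_congr (filter_congr fun j _ => by simp [Metric.mem_thickening_iff, dist_comm])
      fun _ _ => rfl
  rw [hN] at hLP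
  have hfin : ∑ j with ∃ i ∈ A, dist (a i) (b j) < η, d j ≠ ∞ :=
    ne_top_of_le_ne_top (measure_ne_top (∑ j, d j • Measure.dirac (b j)) univ)
      (by simpa [Measure.sum_smul_dirac_apply] using sum_le_sum_of_subset (filter_subset _ _))
  have hAfin : ∑ i ∈ A, c i ≠ ∞ :=
    ne_top_of_le_ne_top (ENNReal.add_ne_top.2 ⟨hfin, ENNReal.ofReal_ne_top⟩) (hA.trans hLP)
  calc ∑ i ∈ A, (c i).toReal = (∑ i ∈ A, c i).toReal :=
        (ENNReal.toReal_sum (ENNReal.sum_ne_top.1 hAfin)).symm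
    _ ≤ (∑ j with ∃ i ∈ A, dist (a i) (b j) < η, d j + ENNReal.ofReal η).toReal :=
        ENNReal.toReal_mono (ENNReal.add_ne_top.2 ⟨hfin, ENNReal.ofReal_ne_top⟩) (hA.trans hLP)
    _ = ∑ j with ∃ i ∈ A, dist (a i) (b j) < η, (d j).toReal + η := by
        rw [ENNReal.toReal_add hfin ENNReal.ofReal_ne_top, ENNReal.toReal_sum
          (ENNReal.sum_ne_top.1 hfin), ENNReal.toReal_ofReal hη.le]

theorem exists_coupling_of_levyProkhorovDist_lt {μ ν : Measure S} [IsProbabilityMeasure μ]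
    [IsProbabilityMeasure ν] (hμ : FinitelySupported μ) (hν : FinitelySupported ν) {η δ : ℝ}
    (h : levyProkhorovDist μ ν < η) (hδ : 0 < δ) :
    ∃ γ : Measure (S × S), FinitelySupported γ ∧ γ.map Prod.fst = μ ∧ γ.map Prod.snd = ν ∧
      γ {p | η ≤ dist p.1 p.2} ≤ ENNReal.ofReal (η + δ) := by
  classical
  obtain ⟨n, c, a, hc, rfl⟩ := hμ
  obtain ⟨m, d, b, hd, rfl⟩ := hν
  have hc_top (i : Fin n) : c i ≠ ∞ :=
    ne_top_of_le_ne_top ENNReal.one_ne_top (hc ▸ single_le_sum (fun _ _ => zero_le) (mem_univ i))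
  have hd_top (j : Fin m) : d j ≠ ∞ :=
    ne_top_of_le_ne_top ENNReal.one_ne_top (hd ▸ single_le_sum (fun _ _ => zero_le) (mem_univ j))
  obtain ⟨π, hπ, hrow, hcol, hbad⟩ := exists_coupling_of_hall (fun i j => dist (a i) (b j) < η)
    (w := fun i => (c i).toReal) (v := fun j => (d j).toReal) (fun _ => ENNReal.toReal_nonneg)
    (fun _ => ENNReal.toReal_nonneg)
    (by rw [← ENNReal.toReal_sum fun i _ => hc_top i, ← ENNReal.toReal_sum fun j _ => hd_top j,
      hc, hd])
    (ENNReal.toReal_nonneg.trans h.le) hδ (sum_le_sum_of_levyProkhorovDist_lt h)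
  have hrow' (i : Fin n) : ∑ j, ENNReal.ofReal (π i j) = c i := by
    rw [← ENNReal.ofReal_sum_of_nonneg fun j _ => hπ i j, hrow, ENNReal.ofReal_toReal (hc_top i)]
  have hcol' (j : Fin m) : ∑ i, ENNReal.ofReal (π i j) = d j := by
    rw [← ENNReal.ofReal_sum_of_nonneg fun i _ => hπ i j, hcol, ENNReal.ofReal_toReal (hd_top j)]
  refine ⟨∑ k : Fin n × Fin m, ENNReal.ofReal (π k.1 k.2) • Measure.dirac (a k.1, b k.2),
    .of_fintype (by rw [Fintype.sum_prod_type]; simp only [hrow', hc]) _, ?_, ?_, ?_⟩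
  · rw [Measure.map_sum_smul_dirac measurable_fst, Fintype.sum_prod_type]
    simp only [← Finset.sum_smul, hrow']
  · rw [Measure.map_sum_smul_dirac measurable_snd, Fintype.sum_prod_type_right]
    simp only [← Finset.sum_smul, hcol']
  · calc _ = ∑ i, ∑ j with ¬ dist (a i) (b j) < η, ENNReal.ofReal (π i j) := by
          rw [Measure.sum_smul_dirac_apply, Finset.sum_filter, Fintype.sum_prod_type]
          simp [Finset.sum_filter, not_lt]
      _ = ENNReal.ofReal (∑ i, ∑ j with ¬ dist (a i) (b j) < η, π i j) := by
          rw [ENNReal.ofReal_sum_of_nonneg fun i _ => sum_nonneg fun j _ => hπ i j]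
          exact sum_congr rfl fun i _ => (ENNReal.ofReal_sum_of_nonneg fun j _ => hπ i j).symm
      _ ≤ ENNReal.ofReal (η + δ) := ENNReal.ofReal_le_ofReal hbad

end LevyProkhorov

lemma kyFanDist_le_of_measure_le {Ω S : Type*} [MeasurableSpace Ω] [PseudoMetricSpace S]
    {P : Measure Ω} {X Y : Ω → S} {r : ℝ} (hr : 0 < r)
    (h : P {ω | r ≤ dist (X ω) (Y ω)} ≤ ENNReal.ofReal r) : kyFanDist P X Y ≤ r :=
  csInf_le ⟨0, fun _ hx => hx.1.le⟩ ⟨hr, ENNReal.toReal_le_of_le_ofReal hr.le h⟩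

theorem stmt3_general {Ω S : Type*} [MeasurableSpace Ω] [MeasurableSpace S] [MetricSpace S]
    [BorelSpace S]
    (P : Measure Ω) [IsProbabilityMeasure P] (hna : Nonatomic P)
    (μ ν : Measure S) [IsProbabilityMeasure μ] [IsProbabilityMeasure ν]
    (hμ : FinitelySupported μ) (hν : FinitelySupported ν)
    {ε : ℝ} (hq : levyProkhorovDist μ ν < ε)
    (X : Ω → S) (hX : Measurable X) (hlaw : P.map X = μ) :
    ∃ Y : Ω → S, Measurable Y ∧ P.map Y = ν ∧ kyFanDist P X Y < ε := by
  obtain ⟨η, hqη, hηε⟩ := exists_between hq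
  obtain ⟨r, hηr, hrε⟩ := exists_between hηε
  obtain ⟨γ, hγ, hγμ, hγν, hγbad⟩ :=
    exists_coupling_of_levyProkhorovDist_lt hμ hν hqη (sub_pos.2 hηr)
  obtain ⟨Y, hY, hXY⟩ := hna.exists_map_prodMk_eq hX hγ (hlaw.trans hγμ.symm)
  have hXYm : Measurable fun ω => (X ω, Y ω) := hX.prodMk hY
  refine ⟨Y, hY, ?_, ?_⟩
  · rw [← hγν, ← hXY, Measure.map_map measurable_snd hXYm]
    rfl
  · have hr : 0 < r := ENNReal.toReal_nonneg.trans_lt (hqη.trans hηr)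
    refine (kyFanDist_le_of_measure_le hr ?_).trans_lt hrε
    calc P {ω | r ≤ dist (X ω) (Y ω)} ≤ γ {p | r ≤ dist p.1 p.2} :=
          hXY ▸ Measure.le_map_apply hXYm.aemeasurable _
      _ ≤ γ {p | η ≤ dist p.1 p.2} := measure_mono fun p hp => hηr.le.trans hp
      _ ≤ ENNReal.ofReal r := by rwa [add_sub_cancel] at hγbad

/-- If `μ`, `ν` are finitely supported probability measures with `q(μ,ν) < ε`, then for any
random variable `X` with law `μ` on a nonatomic probability space there is `Y` on the same
space with law `ν` and `ρ(X,Y) < ε`. -/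
theorem stmt3 {Ω S : Type*} [MeasurableSpace Ω] [MeasurableSpace S] [MetricSpace S]
    [BorelSpace S] [CompleteSpace S] [TopologicalSpace.SeparableSpace S]
    (P : Measure Ω) [IsProbabilityMeasure P] (hna : Nonatomic P)
    (μ ν : Measure S) [IsProbabilityMeasure μ] [IsProbabilityMeasure ν]
    (hμ : FinitelySupported μ) (hν : FinitelySupported ν)
    {ε : ℝ} (hq : levyProkhorovDist μ ν < ε)
    (X : Ω → S) (hX : Measurable X) (hlaw : P.map X = μ) :
    ∃ Y : Ω → S, Measurable Y ∧ P.map Y = ν ∧ kyFanDist P X Y < ε :=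
  stmt3_general P hna μ ν hμ hν hq X hX hlaw
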